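/- arXiv:2605.31218 — 2 statements merged into one kernel-verified Lean document; each statement's English description precedes it below -/
import Mathlib

section
/- The function f(z) = φ(z)/Φ(z), where φ and Φ are the standard normal density and CDF, is strictly decreasing on ℝ; equivalently, its negative derivative ψ(z) = (φ(z)/Φ(z))·(z + φ(z)/Φ(z)) is strictly positive for all z ∈ ℝ. -/
open MeasureTheory Filter

noncomputable def phi (z : ℝ) : ℝ := (Real.sqrt (2 * Real.pi))⁻¹ * Real.exp (-z ^ 2 / 2)
noncomputable def Phi (z : ℝ) : ℝ := ∫ t in Set.Iic z, phi t
noncomputable def psi (z : ℝ) : ℝ := (phi z / Phi z) * (z + phi z / Phi z)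

lemma phi_pos (z : ℝ) : 0 < phi z := by
  unfold phi
  positivity

lemma continuous_phi : Continuous phi := by
  unfold phi
  fun_prop

lemma phi_eq (z : ℝ) : phi z = (Real.sqrt (2 * Real.pi))⁻¹ * Real.exp (-(1/2) * z ^ 2) := by
  unfold phi; ring_nf

lemma integrable_phi : Integrable phi := by
  have := (integrable_exp_neg_mul_sq (by norm_num : (0:ℝ) < 1/2)).const_mul
    (Real.sqrt (2 * Real.pi))⁻¹
  exact this.congr (by filter_upwards with x using (phi_eq x).symm)

lemma integrable_mul_phi : Integrable (fun t : ℝ => t * phi t) := by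
  have := (integrable_mul_exp_neg_mul_sq (by norm_num : (0:ℝ) < 1/2)).const_mul
    (Real.sqrt (2 * Real.pi))⁻¹
  exact this.congr (by filter_upwards with x; rw [phi_eq]; ring)

lemma hasDerivAt_phi (z : ℝ) : HasDerivAt phi (-z * phi z) z := by
  have h1 : HasDerivAt (fun z : ℝ => -z ^ 2 / 2) (-z) z := by
    have := ((hasDerivAt_pow 2 z).neg).div_const 2
    simpa using this.congr_deriv (by ring)
  have h2 := (h1.exp).const_mul (Real.sqrt (2 * Real.pi))⁻¹
  exact h2.congr_deriv (by unfold phi; ring)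

lemma tendsto_phi_atBot : Tendsto phi atBot (nhds 0) := by
  have h1 : Tendsto (fun z : ℝ => -z ^ 2 / 2) atBot atBot := by
    apply Tendsto.atBot_div_const (by norm_num)
    apply tendsto_neg_atTop_atBot.comp
    have : Tendsto (fun z : ℝ => |z| ^ 2) atBot atTop :=
      (tendsto_pow_atTop two_ne_zero).comp tendsto_abs_atBot_atTop
    exact this.congr (fun z => by rw [sq_abs])
  have h2 := (Real.tendsto_exp_atBot.comp h1).const_mul (Real.sqrt (2 * Real.pi))⁻¹
  rw [mul_zero] at h2
  exact h2

lemma Phi_pos (z : ℝ) : 0 < Phi z := by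
  unfold Phi
  rw [setIntegral_pos_iff_support_of_nonneg_ae
    (Filter.Eventually.of_forall fun t => (phi_pos t).le) integrable_phi.integrableOn]
  have : Function.support phi = Set.univ := by
    ext t; simp [Function.mem_support, (phi_pos t).ne']
  rw [this, Set.univ_inter]
  simp [Real.volume_Iic]

lemma hasDerivAt_Phi (z : ℝ) : HasDerivAt Phi (phi z) z := by
  have key : Phi = fun x => Phi 0 + ∫ t in (0:ℝ)..x, phi t := by
    funext x
    rw [← intervalIntegral.integral_Iic_sub_Iic integrable_phi.integrableOn
      integrable_phi.integrableOn]
    unfold Phi; ring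
  rw [key]
  exact (intervalIntegral.integral_hasDerivAt_right
    (integrable_phi.intervalIntegrable)
    (continuous_phi.stronglyMeasurableAtFilter _ _) continuous_phi.continuousAt).const_add _

lemma integral_mul_phi (z : ℝ) : ∫ t in Set.Iic z, t * phi t = -phi z := by
  have h := integral_Iic_of_hasDerivAt_of_tendsto' (a := z) (f := fun t => -phi t)
    (f' := fun t => t * phi t) (m := 0)
    (fun x _ => by exact (hasDerivAt_phi x).neg.congr_deriv (by ring))
    integrable_mul_phi.integrableOn
    (tendsto_phi_atBot.neg.congr' (by filter_upwards with x using rfl) |>.trans_eq (by norm_num))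
  simpa using h

lemma key_pos (z : ℝ) : 0 < z * Phi z + phi z := by
  have hint : Integrable (fun t : ℝ => (z - t) * phi t) := by
    apply ((integrable_phi.const_mul z).sub integrable_mul_phi).congr
    filter_upwards with t
    show z * phi t - t * phi t = (z - t) * phi t
    ring
  have heq : z * Phi z + phi z = ∫ t in Set.Iic z, (z - t) * phi t := by
    have hfe : (fun t => (z - t) * phi t) = fun t => z * phi t - t * phi t := by
      funext t; ring
    rw [hfe, integral_sub (integrable_phi.integrableOn.const_mul z)
      integrable_mul_phi.integrableOn, MeasureTheory.integral_const_mul, integral_mul_phi]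
    unfold Phi; ring
  rw [heq]
  have h1 : Phi (z - 1) ≤ ∫ t in Set.Iic (z - 1), (z - t) * phi t := by
    unfold Phi
    apply setIntegral_mono_on
    · exact integrable_phi.integrableOn
    · exact hint.integrableOn
    · exact measurableSet_Iic
    · intro t ht
      have h1 : (1:ℝ) ≤ z - t := by simp at ht; linarith
      nlinarith [phi_pos t]
  have h2 : ∫ t in Set.Iic (z - 1), (z - t) * phi t ≤ ∫ t in Set.Iic z, (z - t) * phi t := by
    apply setIntegral_mono_set
    · exact hint.integrableOn
    · filter_upwards [ae_restrict_mem measurableSet_Iic] with t ht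
      exact mul_nonneg (by simp at ht; linarith) (phi_pos t).le
    · exact Filter.Eventually.of_forall (Set.Iic_subset_Iic.2 (by linarith))
  linarith [Phi_pos (z - 1)]

lemma psi_pos (z : ℝ) : 0 < psi z := by
  unfold psi
  have hP := Phi_pos z
  have hp := phi_pos z
  have hk := key_pos z
  have : z + phi z / Phi z = (z * Phi z + phi z) / Phi z := by field_simp
  rw [this]
  positivity

lemma hasDerivAt_f (z : ℝ) : HasDerivAt (fun z : ℝ => phi z / Phi z) (-psi z) z := by
  have hP := (Phi_pos z).ne'
  have h := (hasDerivAt_phi z).div (hasDerivAt_Phi z) hP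
  apply h.congr_deriv
  unfold psi
  field_simp
  ring

theorem stmt0 :
    StrictAnti (fun z : ℝ => phi z / Phi z) ∧ ∀ z : ℝ, 0 < psi z := by
  refine ⟨strictAnti_of_deriv_neg fun z => ?_, psi_pos⟩
  rw [(hasDerivAt_f z).deriv]
  simpa using psi_pos z
end

section
/- Let x ~ N(0, I_d), β̄ = (β_0, β^⊤) with β = (γ_0, 0,…,0), let y ∈ {-1,1} satisfy P(y = 1 | x) = Φ(β_0 + γ_0 x_1), and let x̄ = (1, x^⊤)^⊤. Then for every unit vector u ∈ S^d, P(y⟨x̄,u⟩ ≤ 0) ≥ E[Φ(-|β_0 + γ_0 Z|)] where Z ~ N(0,1). -/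
open MeasureTheory Filter

/-!
Write `S = ⟨x̄, u⟩`, a function of `x`, and `q = Φ(β₀ + γ₀ x₁) = P(y = 1 | x)`. The event
`y S ≤ 0` contains `{S ≤ 0, y = 1} ∪ {S > 0, y = -1}`, whose probability is
`E[q; S ≤ 0] + E[1 - q; S > 0]` because `{S ≤ 0}` is `x`-measurable. Bounding `q` and `1 - q`
pointwise below by `min (q, 1 - q) = Φ(-|β₀ + γ₀ x₁|)` gives the claim.
-/

open ProbabilityTheory

lemma phi_eq_gaussianPDFReal : phi = gaussianPDFReal 0 1 := by
  ext z
  simp [phi, gaussianPDFReal]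

lemma Phi_nonneg (z : ℝ) : 0 ≤ Phi z :=
  setIntegral_nonneg measurableSet_Iic fun t _ => by
    rw [phi_eq_gaussianPDFReal]; exact gaussianPDFReal_nonneg 0 1 t

lemma Phi_mono : Monotone Phi := fun a b hab => by
  simp only [Phi, phi_eq_gaussianPDFReal]
  exact setIntegral_mono_set (integrable_gaussianPDFReal 0 1).integrableOn
    (ae_of_all _ (gaussianPDFReal_nonneg 0 1))
    (Set.Iic_subset_Iic.2 hab).eventuallyLE

lemma Phi_add_Phi_neg (z : ℝ) : Phi z + Phi (-z) = 1 := by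
  have hneg : Phi (-z) = ∫ t in Set.Ioi z, phi t := by
    rw [Phi, ← integral_comp_neg_Ioi]
    simp [phi]
  rw [hneg, Phi, ← Set.compl_Iic, integral_add_compl measurableSet_Iic, phi_eq_gaussianPDFReal,
    integral_gaussianPDFReal_eq_one 0 one_ne_zero]
  simpa only [phi_eq_gaussianPDFReal] using integrable_gaussianPDFReal 0 1

lemma Phi_neg_abs_le (z : ℝ) : Phi (-|z|) ≤ Phi z ∧ Phi (-|z|) ≤ 1 - Phi z := by
  have := Phi_add_Phi_neg z
  exact ⟨Phi_mono (neg_abs_le z), by linarith [Phi_mono (neg_le_neg (le_abs_self z))]⟩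

lemma integrable_Phi_comp {Ω : Type*} [MeasurableSpace Ω] {μ : Measure Ω} [IsFiniteMeasure μ]
    {f : Ω → ℝ} (hf : Measurable f) : Integrable (fun ω => Phi (f ω)) μ :=
  .of_bound (Phi_mono.measurable.comp hf).aestronglyMeasurable 1 <| ae_of_all _ fun ω => by
    rw [Real.norm_of_nonneg (Phi_nonneg _), ← Phi_add_Phi_neg (f ω)]
    linarith [Phi_nonneg (-f ω)]

section CondProb

variable {Ω : Type*} {m m₀ : MeasurableSpace Ω} {μ : Measure Ω} [IsFiniteMeasure μ]
  {B s : Set Ω} {q : Ω → ℝ}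

lemma setIntegral_eq_measureReal_inter_of_condExp (hm : m ≤ m₀) (hB : MeasurableSet B)
    (hq : μ[B.indicator (fun _ => (1 : ℝ)) | m] =ᵐ[μ] q) (hs : MeasurableSet[m] s) :
    ∫ ω in s, q ω ∂μ = μ.real (s ∩ B) := by
  rw [← setIntegral_congr_ae (hm s hs) (hq.mono fun _ h _ => h),
    setIntegral_condExp hm ((integrable_const 1).indicator hB) hs, ← Pi.one_def, integral_indicator_one hB, measureReal_restrict_apply hB, Set.inter_comm]

lemma setIntegral_one_sub_eq_measureReal_diff_of_condExp (hm : m ≤ m₀) (hB : MeasurableSet B)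
    (hq : μ[B.indicator (fun _ => (1 : ℝ)) | m] =ᵐ[μ] q) (hs : MeasurableSet[m] s) :
    ∫ ω in s, (1 - q ω) ∂μ = μ.real (s \ B) := by
  have hq_int : Integrable q μ := integrable_condExp.congr hq
  rw [integral_sub (integrable_const 1).integrableOn hq_int.integrableOn,
    setIntegral_eq_measureReal_inter_of_condExp hm hB hq hs, setIntegral_const, smul_eq_mul,
    mul_one, ← measureReal_inter_add_sdiff (s := s) hB]
  ring

lemma integral_le_measureReal_mul_nonpos_of_condExp (hm : m ≤ m₀) {y S g : Ω → ℝ}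
    (hy : Measurable y) (hyval : ∀ ω, y ω = 1 ∨ y ω = -1) (hS : Measurable[m] S)
    (hq : μ[{ω | y ω = 1}.indicator (fun _ => (1 : ℝ)) | m] =ᵐ[μ] q) (hg : Integrable g μ)
    (hgq : ∀ ω, g ω ≤ q ω ∧ g ω ≤ 1 - q ω) :
    ∫ ω, g ω ∂μ ≤ μ.real {ω | y ω * S ω ≤ 0} := by
  set B := {ω | y ω = 1}
  set N := {ω | S ω ≤ 0}
  have hB : MeasurableSet B := hy (measurableSet_singleton 1)
  have hN : MeasurableSet[m] N := measurableSet_le hS measurable_const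
  have hq_int : Integrable q μ := integrable_condExp.congr hq
  have hsub : N ∩ B ∪ Nᶜ \ B ⊆ {ω | y ω * S ω ≤ 0} := by
    rintro ω (⟨hSω, hyω⟩ | ⟨hSω, hyω⟩)
    · change y ω * S ω ≤ 0
      rw [show y ω = 1 from hyω, one_mul]
      exact hSω
    · change y ω * S ω ≤ 0
      rw [(hyval ω).resolve_left hyω]
      linarith [not_le.1 (show ¬S ω ≤ 0 from hSω)]
  have hdisj : Disjoint (N ∩ B) (Nᶜ \ B) :=
    Disjoint.mono Set.inter_subset_left Set.sdiff_subset disjoint_compl_right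
  calc ∫ ω, g ω ∂μ = ∫ ω in N, g ω ∂μ + ∫ ω in Nᶜ, g ω ∂μ :=
        (integral_add_compl (hm N hN) hg).symm
    _ ≤ ∫ ω in N, q ω ∂μ + ∫ ω in Nᶜ, (1 - q ω) ∂μ :=
        add_le_add (setIntegral_mono hg.integrableOn hq_int.integrableOn fun ω => (hgq ω).1)
          (setIntegral_mono hg.integrableOn ((integrable_const 1).sub hq_int).integrableOn
            fun ω => (hgq ω).2)
    _ = μ.real (N ∩ B ∪ Nᶜ \ B) := by
        rw [setIntegral_eq_measureReal_inter_of_condExp hm hB hq hN,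
          setIntegral_one_sub_eq_measureReal_diff_of_condExp hm hB hq hN.compl,
          measureReal_union hdisj ((hm N hN).compl.diff hB)]
    _ ≤ μ.real {ω | y ω * S ω ≤ 0} := measureReal_mono hsub

end CondProb

open ProbabilityTheory in
theorem stmt17_general {Ω : Type*} [MeasureSpace Ω] [IsProbabilityMeasure (ℙ : Measure Ω)]
    {d : ℕ} (hd : 0 < d)
    (x : Ω → (Fin d → ℝ)) (hx : Measurable x)
    (y : Ω → ℝ) (hy : Measurable y) (hyval : ∀ ω, y ω = 1 ∨ y ω = -1)
    (β0 γ0 : ℝ)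
    (hcond :
      (ℙ[fun ω => ({ω' | y ω' = 1} : Set Ω).indicator (fun _ => (1 : ℝ)) ω |
          MeasurableSpace.comap x inferInstance]) =ᵐ[ℙ]
        fun ω => Phi (β0 + γ0 * x ω ⟨0, hd⟩))
    (u : Fin (d + 1) → ℝ) :
    (ℙ {ω | y ω * (u 0 + ∑ j : Fin d, u j.succ * x ω j) ≤ 0}).toReal ≥
      ∫ ω, Phi (-|β0 + γ0 * x ω ⟨0, hd⟩|) ∂ℙ := by
  have hS : Measurable[MeasurableSpace.comap x inferInstance]
      fun ω => u 0 + ∑ j : Fin d, u j.succ * x ω j :=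
    (show Measurable fun w : Fin d → ℝ => u 0 + ∑ j : Fin d, u j.succ * w j by fun_prop).comp
      (comap_measurable x)
  have ht : Measurable fun ω => -|β0 + γ0 * x ω ⟨0, hd⟩| := by fun_prop
  exact integral_le_measureReal_mul_nonpos_of_condExp hx.comap_le hy hyval hS hcond
    (integrable_Phi_comp ht) fun ω => Phi_neg_abs_le _

open ProbabilityTheory in
theorem stmt17 {Ω : Type*} [MeasureSpace Ω] [IsProbabilityMeasure (ℙ : Measure Ω)]
    {d : ℕ} (hd : 0 < d)
    (x : Ω → (Fin d → ℝ)) (hx : Measurable x)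
    (hlaw : Measure.map x ℙ = Measure.pi fun _ : Fin d => gaussianReal 0 1)
    (y : Ω → ℝ) (hy : Measurable y) (hyval : ∀ ω, y ω = 1 ∨ y ω = -1)
    (β0 γ0 : ℝ)
    (hcond :
      (ℙ[fun ω => ({ω' | y ω' = 1} : Set Ω).indicator (fun _ => (1 : ℝ)) ω |
          MeasurableSpace.comap x inferInstance]) =ᵐ[ℙ]
        fun ω => Phi (β0 + γ0 * x ω ⟨0, hd⟩))
    (u : Fin (d + 1) → ℝ) (hu : ∑ i, (u i) ^ 2 = 1) :
    (ℙ {ω | y ω * (u 0 + ∑ j : Fin d, u j.succ * x ω j) ≤ 0}).toReal ≥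
      ∫ ω, Phi (-|β0 + γ0 * x ω ⟨0, hd⟩|) ∂ℙ :=
  stmt17_general hd x hx y hy hyval β0 γ0 hcond u
end
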